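/- arXiv:1310.5590 — 5 statements merged into one kernel-verified Lean document; each statement's English description precedes it below -/
import Mathlib

section
/- Let f : ℕ → Ordinal → Bool and suppose that for every n the set {γ : γ < ω_{ω₁} ∧ f n γ = true} is unbounded in ω_{ω₁}. Then for every β₀ < ω₁ there exists a limit ordinal α with β₀ < α < ω₁ such that for every n the set {γ : γ < ω_α ∧ f n γ = true} is unbounded in ω_α. -/
open Cardinal Ordinal

/-- A set of ordinals `S` is unbounded in the ordinal `δ` if for every `β < δ`
there is `γ ∈ S` with `β ≤ γ < δ`. -/
def UnboundedIn (S : Set Ordinal) (δ : Ordinal) : Prop :=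
  ∀ β < δ, ∃ γ ∈ S, β ≤ γ ∧ γ < δ

/-- Below `ω_o` with `o` limit, every ordinal is below some `ω_δ` with `δ < o`. -/
lemma exists_aleph_lt {o ξ : Ordinal} (ho : Order.IsSuccLimit o)
    (hξ : ξ < (Cardinal.aleph o).ord) : ∃ δ < o, ξ < (Cardinal.aleph δ).ord := by
  rw [Cardinal.lt_ord] at hξ
  by_contra hcon
  push_neg at hcon
  have hall : ∀ δ : Set.Iio o, Cardinal.aleph δ ≤ ξ.card := fun δ => by
    have := hcon δ.1 δ.2
    rwa [Cardinal.ord_le] at this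
  have hne : Nonempty (Set.Iio o) := ⟨⟨0, ho.pos⟩⟩
  have : Cardinal.aleph o ≤ ξ.card := by
    rw [Cardinal.aleph_limit ho]
    exact ciSup_le' hall
  exact absurd hξ (not_lt.2 this)

/-- If each cell shows `1` unboundedly often below `ω_{ω₁}`, then above any
countable `β₀` there is a countable limit ordinal `α` such that each cell
shows `1` unboundedly often below `ω_α`. -/
theorem stmt_2 (f : ℕ → Ordinal → Bool)
    (h : ∀ n, UnboundedIn {γ | f n γ = true} (Cardinal.aleph ((Cardinal.aleph 1).ord)).ord) :
    ∀ β₀ < (Cardinal.aleph 1).ord, ∃ α, Order.IsSuccLimit α ∧ β₀ < α ∧ α < (Cardinal.aleph 1).ord ∧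
      ∀ n, UnboundedIn {γ | f n γ = true} (Cardinal.aleph α).ord := by
  intro β₀ hβ₀
  set Ω := (Cardinal.aleph 1).ord with hΩdef
  set Λ := (Cardinal.aleph Ω).ord with hΛdef
  have hΩlim : Order.IsSuccLimit Ω := Cardinal.isSuccLimit_ord (Cardinal.aleph0_le_aleph 1)
  -- choose witnesses
  choose g hg1 hg2 hg3 using h
  -- key step: given `a < Ω` and `k`, find a bigger `δ < Ω` absorbing the witnesses
  -- taken at `ω_a` for all `n ≤ k`.
  have key : ∀ a, ∀ ha : a < Ω, ∀ k : ℕ, ∃ δ, δ < Ω ∧ a < δ ∧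
      ∀ n ≤ k, g n (Cardinal.aleph a).ord
        (Cardinal.ord_lt_ord.2 (Cardinal.aleph_lt_aleph.2 ha)) < (Cardinal.aleph δ).ord := by
    intro a ha k
    have hξa : (Cardinal.aleph a).ord < Λ :=
      Cardinal.ord_lt_ord.2 (Cardinal.aleph_lt_aleph.2 ha)
    set M : Ordinal := (Finset.range (k + 1)).sup
      (fun n => g n (Cardinal.aleph a).ord hξa) with hMdef
    have hM : M < Λ := by
      rw [hMdef]
      refine Finset.sup_lt_iff (bot_le.trans_lt hξa) |>.2 fun n _ => ?_
      exact hg3 n (Cardinal.aleph a).ord hξa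
    obtain ⟨δ₁, hδ₁Ω, hδ₁⟩ := exists_aleph_lt hΩlim (max_lt hM hξa)
    refine ⟨max δ₁ (Order.succ a), max_lt hδ₁Ω (hΩlim.succ_lt ha), ?_, ?_⟩
    · exact (Order.lt_succ a).trans_le (le_max_right _ _)
    · intro n hn
      have h1 : g n (Cardinal.aleph a).ord hξa ≤ M := by
        rw [hMdef]
        exact Finset.le_sup (f := fun n => g n (Cardinal.aleph a).ord hξa)
          (Finset.mem_range.2 (Nat.lt_succ_of_le hn))
      have h2 : (Cardinal.aleph δ₁).ord ≤ (Cardinal.aleph (max δ₁ (Order.succ a))).ord :=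
        Cardinal.ord_le_ord.2 (Cardinal.aleph_le_aleph.2 (le_max_left _ _))
      exact (h1.trans_lt ((le_max_left M _).trans_lt hδ₁)).trans_le h2
  choose F hF1 hF2 hF3 using key
  -- the recursive sequence of countable ordinals
  let seq : ℕ → {x : Ordinal // x < Ω} := fun k =>
    Nat.rec ⟨Order.succ β₀, hΩlim.succ_lt hβ₀⟩ (fun k p => ⟨F p.1 p.2 k, hF1 p.1 p.2 k⟩) k
  have hstrict : StrictMono (fun k => (seq k).1) :=
    strictMono_nat_of_lt_succ fun k => hF2 (seq k).1 (seq k).2 k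
  set α := ⨆ k, (seq k).1 with hαdef
  have hle : ∀ k, (seq k).1 ≤ α := fun k => by
    rw [hαdef]; exact Ordinal.le_iSup (fun k => (seq k).1) k
  have hαΩ : α < Ω := by
    rw [hαdef]
    refine Ordinal.iSup_lt_ord_lift (f := fun k => (seq k).1) ?_ fun k => (seq k).2
    rw [Cardinal.isRegular_aleph_one.cof_eq, Cardinal.mk_nat, Cardinal.lift_aleph0]
    exact Cardinal.aleph0_lt_aleph_one
  have hβ₀α : β₀ < α := (Order.lt_succ β₀).trans_le (hle 0)
  have hlt : ∀ b < α, ∃ k, b < (seq k).1 := fun b hb => Ordinal.lt_iSup_iff.1 hb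
  have hαlim : Order.IsSuccLimit α := by
    refine Ordinal.isSuccLimit_iff.2 ⟨fun h0 => ?_, Order.isSuccPrelimit_of_succ_lt fun b hb => ?_⟩
    · exact absurd (h0 ▸ hβ₀α) (not_lt_zero (a := β₀))
    · obtain ⟨k, hk⟩ := hlt b hb
      exact ((Order.succ_le_of_lt hk).trans_lt (hstrict (Nat.lt_succ_self k))).trans_le
        (hle (k + 1))
  refine ⟨α, hαlim, hβ₀α, hαΩ, fun n β hβ => ?_⟩
  obtain ⟨δ, hδα, hβδ⟩ := exists_aleph_lt hαlim hβ
  obtain ⟨k, hk⟩ := hlt δ hδα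
  set m := max k n with hmdef
  have hkm : (seq k).1 ≤ (seq m).1 := hstrict.monotone (le_max_left k n)
  have hξm : (Cardinal.aleph (seq m).1).ord < Λ :=
    Cardinal.ord_lt_ord.2 (Cardinal.aleph_lt_aleph.2 (seq m).2)
  have hβξm : β < (Cardinal.aleph (seq m).1).ord := by
    refine hβδ.trans_le (Cardinal.ord_le_ord.2 (Cardinal.aleph_le_aleph.2 ?_))
    exact hk.le.trans hkm
  refine ⟨g n (Cardinal.aleph (seq m).1).ord hξm, hg1 n _ hξm, ?_, ?_⟩
  · exact hβξm.le.trans (hg2 n _ hξm)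
  · have hwit : g n (Cardinal.aleph (seq m).1).ord hξm
        < (Cardinal.aleph (F (seq m).1 (seq m).2 m)).ord :=
      hF3 (seq m).1 (seq m).2 m n (le_max_right k n)
    have : (Cardinal.aleph (F (seq m).1 (seq m).2 m)).ord ≤ (Cardinal.aleph α).ord := by
      refine Cardinal.ord_le_ord.2 (Cardinal.aleph_le_aleph.2 ?_)
      exact hle (m + 1)
    exact hwit.trans_le this
end

section
/- For every f : ℕ → Ordinal → Bool there exists a limit ordinal α < ω₁ such that for every n: the set {γ : γ < ω_α ∧ f n γ = true} is unbounded in ω_α if and only if the set {γ : γ < ω_{ω₁} ∧ f n γ = true} is unbounded in ω_{ω₁}; and moreover, if {γ : γ < ω_{ω₁} ∧ f n γ = true} is bounded in ω_{ω₁}, then f n γ = false for every γ with ω_α ≤ γ < ω_{ω₁}. -/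
open Cardinal Ordinal

private noncomputable abbrev ww1 : Ordinal := (Cardinal.aleph 1).ord
private noncomputable abbrev BigO : Ordinal := (Cardinal.aleph ((Cardinal.aleph 1).ord)).ord

lemma ww1_isLimit : Order.IsSuccLimit ww1 := isSuccLimit_ord (aleph0_le_aleph 1)

lemma aux_index {γ : Ordinal} (h : γ < BigO) : ∃ β < ww1, γ < (aleph β).ord := by
  rw [show BigO = (Cardinal.aleph ww1).ord from rfl, Cardinal.lt_ord,
    aleph_limit ww1_isLimit] at h
  have : Nonempty (Set.Iio ww1) := ⟨⟨0, ww1_isLimit.pos⟩⟩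
  obtain ⟨⟨β, hβ⟩, h⟩ := (lt_ciSup_iff (Cardinal.bddAbove_range _)).1 h
  exact ⟨β, hβ, Cardinal.lt_ord.2 h⟩

lemma aux_sup_lt (g : ℕ → Ordinal) (hg : ∀ k, g k < ww1) : (⨆ k, g k) < ww1 := by
  apply iSup_lt_ord_lift _ hg
  rw [show ww1 = (Cardinal.aleph 1).ord from rfl, Cardinal.isRegular_aleph_one.cof_eq]
  simpa using aleph0_lt_aleph_one

lemma aux_lt_big {x : Ordinal} (hx : x < ww1) : (aleph x).ord < BigO :=
  Cardinal.ord_lt_ord.2 (aleph_lt_aleph.2 hx)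

lemma aux_base (f : ℕ → Ordinal → Bool) :
    ∃ b, b < ww1 ∧ ∀ n, ¬ UnboundedIn {γ | f n γ = true} BigO →
      ∀ γ, (aleph b).ord ≤ γ → γ < BigO → f n γ = false := by
  have H : ∀ n, ∃ b, b < ww1 ∧ (¬ UnboundedIn {γ | f n γ = true} BigO →
      ∀ γ, (aleph b).ord ≤ γ → γ < BigO → f n γ = false) := by
    intro n
    by_cases hU : UnboundedIn {γ | f n γ = true} BigO
    · exact ⟨0, ww1_isLimit.pos, fun h => absurd hU h⟩
    · unfold UnboundedIn at hU
      push_neg at hU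
      obtain ⟨β, hβ, hno⟩ := hU
      obtain ⟨b, hb, hβb⟩ := aux_index hβ
      refine ⟨b, hb, fun _ γ h1 h2 => ?_⟩
      by_contra h
      rw [Bool.not_eq_false] at h
      exact absurd (hno γ h (le_of_lt (lt_of_lt_of_le hβb h1))) (not_le.2 h2)
  choose b hb1 hb2 using H
  refine ⟨⨆ n, b n, aux_sup_lt b hb1, fun n hU γ h1 h2 => ?_⟩
  refine hb2 n hU γ (le_trans ?_ h1) h2
  exact Cardinal.ord_le_ord.2 (aleph_le_aleph.2 (le_ciSup (Ordinal.bddAbove_range _) n))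

lemma aux_step (f : ℕ → Ordinal → Bool) {x : Ordinal} (hx : x < ww1) :
    ∃ y, x < y ∧ y < ww1 ∧ ∀ n, UnboundedIn {γ | f n γ = true} BigO →
      ∃ γ, f n γ = true ∧ (aleph x).ord ≤ γ ∧ γ < (aleph y).ord := by
  have H : ∀ n, ∃ b, b < ww1 ∧ (UnboundedIn {γ | f n γ = true} BigO →
      ∃ γ, f n γ = true ∧ (aleph x).ord ≤ γ ∧ γ < (aleph b).ord) := by
    intro n
    by_cases hU : UnboundedIn {γ | f n γ = true} BigO
    · obtain ⟨γ, hγS, hγ1, hγ2⟩ := hU (aleph x).ord (aux_lt_big hx)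
      obtain ⟨b, hb, hγb⟩ := aux_index hγ2
      exact ⟨b, hb, fun _ => ⟨γ, hγS, hγ1, hγb⟩⟩
    · exact ⟨0, ww1_isLimit.pos, fun h => absurd h hU⟩
  choose b hb1 hb2 using H
  refine ⟨(⨆ n, b n) ⊔ (x + 1), ?_, ?_, ?_⟩
  · have : x < x + 1 := by rw [Ordinal.add_one_eq_succ]; exact Order.lt_succ x
    exact lt_of_lt_of_le this le_sup_right
  · refine sup_lt_iff.2 ⟨aux_sup_lt b hb1, ?_⟩
    rw [Ordinal.add_one_eq_succ]
    exact ww1_isLimit.succ_lt hx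
  · intro n hU
    obtain ⟨γ, h1, h2, h3⟩ := hb2 n hU
    refine ⟨γ, h1, h2, lt_of_lt_of_le h3 ?_⟩
    refine Cardinal.ord_le_ord.2 (aleph_le_aleph.2 (le_trans (le_ciSup (Ordinal.bddAbove_range _) n) le_sup_left))

private noncomputable def seqF (f : ℕ → Ordinal → Bool) : ℕ → {x : Ordinal // x < ww1}
  | 0 => ⟨(aux_base f).choose, (aux_base f).choose_spec.1⟩
  | k + 1 => ⟨(aux_step f (seqF f k).2).choose,
      ((aux_step f (seqF f k).2).choose_spec.2.1)⟩

lemma seqF_spec (f : ℕ → Ordinal → Bool) (k : ℕ) :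
    (seqF f k).1 < (seqF f (k + 1)).1 ∧ ∀ n, UnboundedIn {γ | f n γ = true} BigO →
      ∃ γ, f n γ = true ∧ (aleph (seqF f k).1).ord ≤ γ ∧ γ < (aleph (seqF f (k + 1)).1).ord := by
  have h := (aux_step f (seqF f k).2).choose_spec
  exact ⟨h.1, h.2.2⟩

lemma seqF_zero_spec (f : ℕ → Ordinal → Bool) :
    ∀ n, ¬ UnboundedIn {γ | f n γ = true} BigO →
      ∀ γ, (aleph (seqF f 0).1).ord ≤ γ → γ < BigO → f n γ = false :=
  (aux_base f).choose_spec.2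

lemma aux_limit (g : ℕ → Ordinal) (h : ∀ k, g k < g (k + 1)) :
    Order.IsSuccLimit (⨆ k, g k) ∧ ∀ k, g k < ⨆ k, g k := by
  have hlt : ∀ k, g k < ⨆ k, g k :=
    fun k => lt_of_lt_of_le (h k) (le_ciSup (Ordinal.bddAbove_range _) (k + 1))
  refine ⟨Ordinal.isSuccLimit_iff.2 ⟨?_, Order.isSuccPrelimit_iff_succ_lt.2 fun a ha => ?_⟩, hlt⟩
  · exact fun h0 => absurd (h0 ▸ hlt 0) (not_lt_zero (a := g 0))
  · obtain ⟨k, hk⟩ := Ordinal.lt_iSup_iff.1 ha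
    exact lt_of_le_of_lt (Order.succ_le_of_lt (lt_of_lt_of_le hk (le_of_lt (h k)))) (hlt (k + 1))

lemma aux_aleph_sup (g : ℕ → Ordinal) (h : ∀ k, g k < g (k + 1)) {β : Ordinal}
    (hβ : β < (aleph (⨆ k, g k)).ord) : ∃ k, β < (aleph (g k)).ord := by
  obtain ⟨hlim, hlt⟩ := aux_limit g h
  rw [Cardinal.lt_ord, aleph_limit hlim] at hβ
  have : Nonempty (Set.Iio (⨆ k, g k)) := ⟨⟨0, hlim.pos⟩⟩
  obtain ⟨⟨i, hi⟩, hβi⟩ := (lt_ciSup_iff (Cardinal.bddAbove_range _)).1 hβ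
  obtain ⟨k, hk⟩ := Ordinal.lt_iSup_iff.1 hi
  exact ⟨k, Cardinal.lt_ord.2 (lt_of_lt_of_le hβi (aleph_le_aleph.2 (le_of_lt hk)))⟩

/-- The limsup configuration at stage `ω_{ω₁}` already appears at some cardinal
stage `ω_α` with `α` a countable limit ordinal, and cells bounded (stabilized to `0`)
below `ω_{ω₁}` show `0` from stage `ω_α` onward. -/
theorem stmt_3 (f : ℕ → Ordinal → Bool) :
    ∃ α, Order.IsSuccLimit α ∧ α < (Cardinal.aleph 1).ord ∧ ∀ n,
      (UnboundedIn {γ | f n γ = true} (Cardinal.aleph α).ord ↔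
        UnboundedIn {γ | f n γ = true} (Cardinal.aleph ((Cardinal.aleph 1).ord)).ord) ∧
      (¬ UnboundedIn {γ | f n γ = true} (Cardinal.aleph ((Cardinal.aleph 1).ord)).ord →
        ∀ γ, (Cardinal.aleph α).ord ≤ γ → γ < (Cardinal.aleph ((Cardinal.aleph 1).ord)).ord →
          f n γ = false) := by
  set g : ℕ → Ordinal := fun k => (seqF f k).1 with hg
  have hmono : ∀ k, g k < g (k + 1) := fun k => (seqF_spec f k).1
  obtain ⟨hlim, hlt⟩ := aux_limit g hmono
  set α : Ordinal := ⨆ k, g k with hα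
  have hαlt : α < ww1 := aux_sup_lt g (fun k => (seqF f k).2)
  have hord : (aleph α).ord < BigO := aux_lt_big hαlt
  have hle0 : (aleph (g 0)).ord ≤ (aleph α).ord :=
    Cardinal.ord_le_ord.2 (aleph_le_aleph.2 (le_of_lt (hlt 0)))
  refine ⟨α, hlim, hαlt, fun n => ?_⟩
  have hbase := seqF_zero_spec f n
  constructor
  · constructor
    · -- unbounded in aleph α implies unbounded in BigO
      intro hUα
      by_contra hU
      have hlt0 : (aleph (g 0)).ord < (aleph α).ord :=
        Cardinal.ord_lt_ord.2 (aleph_lt_aleph.2 (hlt 0))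
      obtain ⟨γ, hγS, hγ1, hγ2⟩ := hUα (aleph (g 0)).ord hlt0
      have := hbase hU γ hγ1 (lt_trans hγ2 hord)
      simp only [Set.mem_setOf_eq] at hγS
      rw [hγS] at this
      exact Bool.noConfusion this
    · -- unbounded in BigO implies unbounded in aleph α
      intro hU β hβ
      obtain ⟨k, hk⟩ := aux_aleph_sup g hmono hβ
      obtain ⟨γ, h1, h2, h3⟩ := (seqF_spec f k).2 n hU
      refine ⟨γ, h1, le_of_lt (lt_of_lt_of_le hk h2), lt_of_lt_of_le h3 ?_⟩
      exact Cardinal.ord_le_ord.2 (aleph_le_aleph.2 (le_of_lt (hlt (k + 1))))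
  · intro hU γ h1 h2
    exact hbase hU γ (le_trans hle0 h1) h2
end

section
/- For every f : ℕ → Ordinal → Bool and every β₀ < ω₁ there exist limit ordinals α and α' with β₀ < α < α' < ω₁ such that for every n: the set {γ : γ < ω_α ∧ f n γ = true} is unbounded in ω_α if and only if the set {γ : γ < ω_{α'} ∧ f n γ = true} is unbounded in ω_{α'}; and moreover, if {γ : γ < ω_α ∧ f n γ = true} is bounded in ω_α, then f n γ = false for every γ with ω_α ≤ γ < ω_{α'}. -/
open Cardinal Ordinal

namespace Stmt4Aux

open scoped Ordinal

noncomputable def eps (x : Ordinal) : Ordinal := sInf {ε | x < ω_ ε}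

lemma omega1_isLimit : Order.IsSuccLimit (ω₁ : Ordinal) := by
  exact isSuccLimit_omega 1

lemma eps_lt {x : Ordinal} (hx : x < ω_ ω₁) : eps x < ω₁ := by
  obtain ⟨b, hb, hxb⟩ := (isNormal_omega.lt_iff_exists_lt omega1_isLimit).1 hx
  exact lt_of_le_of_lt (csInf_le' hxb) hb

lemma lt_omega_eps {x : Ordinal} (hx : x < ω_ ω₁) : x < ω_ (eps x) := by
  obtain ⟨b, hb, hxb⟩ := (isNormal_omega.lt_iff_exists_lt omega1_isLimit).1 hx
  have hne : {ε | x < ω_ ε}.Nonempty := ⟨b, hxb⟩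
  exact csInf_mem hne

universe u
variable (f : ℕ → Ordinal.{u} → Bool)

/-- selector for an element of `{γ | f n γ = true}` above `β` and below `ω_ ω₁` -/
noncomputable def gsel (n : ℕ) (β : Ordinal) : Ordinal :=
  sInf {γ | f n γ = true ∧ β ≤ γ ∧ γ < ω_ ω₁}

lemma gsel_mem {n : ℕ} (hU : UnboundedIn {γ | f n γ = true} (ω_ ω₁)) {β : Ordinal}
    (hβ : β < ω_ ω₁) : f n (gsel f n β) = true ∧ β ≤ gsel f n β ∧ gsel f n β < ω_ ω₁ := by
  obtain ⟨γ, hγ1, hγ2, hγ3⟩ := hU β hβ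
  have hne : {γ | f n γ = true ∧ β ≤ γ ∧ γ < ω_ ω₁}.Nonempty := ⟨γ, hγ1, hγ2, hγ3⟩
  exact csInf_mem hne

/-- selector for a bound past which cell `n` is never true below `ω_ ω₁` -/
noncomputable def bsel (n : ℕ) : Ordinal :=
  sInf {b | ∀ γ, b ≤ γ → γ < ω_ ω₁ → f n γ = false}

lemma bsel_spec {n : ℕ} (hU : ¬ UnboundedIn {γ | f n γ = true} (ω_ ω₁)) :
    bsel f n < ω_ ω₁ ∧ ∀ γ, bsel f n ≤ γ → γ < ω_ ω₁ → f n γ = false := by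
  simp only [UnboundedIn, not_forall, not_exists] at hU
  obtain ⟨b, hb, hball⟩ := hU
  have hbmem : b ∈ {b | ∀ γ, b ≤ γ → γ < ω_ ω₁ → f n γ = false} := by
    intro γ h1 h2
    have := hball γ
    simp only [Set.mem_setOf_eq, not_and] at this
    rcases Bool.eq_false_or_eq_true (f n γ) with h | h
    · exact absurd h2 (this h h1)
    · exact h
  have hne : {b | ∀ γ, b ≤ γ → γ < ω_ ω₁ → f n γ = false}.Nonempty := ⟨b, hbmem⟩
  exact ⟨lt_of_le_of_lt (csInf_le' hbmem) hb, csInf_mem hne⟩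

open Classical in
/-- one closure step -/
noncomputable def enxt (n : ℕ) (β : Ordinal) : Ordinal :=
  if UnboundedIn {γ | f n γ = true} (ω_ ω₁) then eps (gsel f n (ω_ β)) else 0

lemma enxt_lt {n : ℕ} {β : Ordinal} (hβ : β < ω₁) : enxt f n β < ω₁ := by
  unfold enxt
  split_ifs with h
  · exact eps_lt (gsel_mem f h (omega_lt_omega.2 hβ)).2.2
  · exact omega1_isLimit.pos

noncomputable def step (β : Ordinal) : Ordinal := (β + 1) ⊔ ⨆ n, enxt f n β

lemma nat_lt_cof : Cardinal.lift.{u, 0} (Cardinal.mk ℕ) < (ω₁ : Ordinal.{u}).cof := by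
  rw [← ord_aleph, isRegular_aleph_one.cof_eq, Cardinal.mk_nat, Cardinal.lift_aleph0]
  exact aleph0_lt_aleph_one

lemma step_lt {β : Ordinal} (hβ : β < ω₁) : step f β < ω₁ := by
  apply max_lt (omega1_isLimit.succ_lt hβ)
  exact iSup_lt_ord_lift nat_lt_cof fun n => enxt_lt f hβ

lemma lt_step (β : Ordinal) : β < step f β :=
  lt_of_lt_of_le (Order.lt_succ β) (le_max_left _ _)

noncomputable def seq (b : Ordinal) : ℕ → Ordinal
  | 0 => b
  | k + 1 => step f (seq b k)

lemma seq_lt {b : Ordinal} (hb : b < ω₁) : ∀ k, seq f b k < ω₁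
  | 0 => hb
  | k + 1 => step_lt f (seq_lt hb k)

lemma seq_succ_gt (b : Ordinal) (k : ℕ) : seq f b k < seq f b (k + 1) := lt_step f _

lemma sup_seq_lt {b : Ordinal} (hb : b < ω₁) : (⨆ k, seq f b k) < ω₁ :=
  iSup_lt_ord_lift nat_lt_cof (seq_lt f hb)

lemma lt_sup_seq (b : Ordinal) : b < ⨆ k, seq f b k :=
  lt_of_lt_of_le (seq_succ_gt f b 0) (le_ciSup (Ordinal.bddAbove_range _) 1)

lemma sup_seq_isLimit (b : Ordinal) : Order.IsSuccLimit (⨆ k, seq f b k) := by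
  rw [Ordinal.isSuccLimit_iff, Order.isSuccPrelimit_iff_succ_lt]
  constructor
  · exact (pos_iff_ne_zero).1 <| lt_of_le_of_lt (zero_le (a := b)) (lt_sup_seq f b)
  · intro a ha
    obtain ⟨k, hk⟩ := (lt_ciSup_iff' (Ordinal.bddAbove_range _)).1 ha
    calc Order.succ a ≤ seq f b k := Order.succ_le_of_lt hk
    _ < seq f b (k + 1) := seq_succ_gt f b k
    _ ≤ _ := le_ciSup (Ordinal.bddAbove_range _) (k + 1)

/-- key closure property: unbounded cells remain unbounded at closure points -/
lemma sup_seq_unbounded {n : ℕ} (hU : UnboundedIn {γ | f n γ = true} (ω_ ω₁))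
    {b : Ordinal} (hb : b < ω₁) :
    UnboundedIn {γ | f n γ = true} (ω_ (⨆ k, seq f b k)) := by
  intro β hβ
  obtain ⟨d, hd, hβd⟩ := (isNormal_omega.lt_iff_exists_lt (sup_seq_isLimit f b)).1 hβ
  obtain ⟨k, hk⟩ := (lt_ciSup_iff' (Ordinal.bddAbove_range _)).1 hd
  have hklt : seq f b k < ω₁ := seq_lt f hb k
  have hωk : (ω_ (seq f b k)) < ω_ ω₁ := omega_lt_omega.2 hklt
  obtain ⟨hg1, hg2, hg3⟩ := gsel_mem f hU hωk
  set γ := gsel f n (ω_ (seq f b k)) with hγdef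
  have heps : eps γ ≤ seq f b (k + 1) := by
    calc eps γ = enxt f n (seq f b k) := by rw [enxt, if_pos hU]
    _ ≤ ⨆ m, enxt f m (seq f b k) := le_ciSup (Ordinal.bddAbove_range _) n
    _ ≤ step f (seq f b k) := le_max_right _ _
    _ = seq f b (k + 1) := rfl
  refine ⟨γ, hg1, ?_, ?_⟩
  · exact le_of_lt (lt_of_lt_of_le hβd (le_trans (omega_le_omega.2 hk.le) hg2))
  · calc γ < ω_ (eps γ) := lt_omega_eps hg3
    _ ≤ ω_ (seq f b (k + 1)) := omega_le_omega.2 heps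
    _ ≤ _ := omega_le_omega.2 (le_ciSup (Ordinal.bddAbove_range _) (k + 1))

open Classical in
/-- bound for a cell that is eventually false -/
noncomputable def abnd (n : ℕ) : Ordinal :=
  if UnboundedIn {γ | f n γ = true} (ω_ ω₁) then 0 else eps (bsel f n) + 1

lemma abnd_lt (n : ℕ) : abnd f n < ω₁ := by
  unfold abnd
  split_ifs with h
  · exact omega1_isLimit.pos
  · rw [Ordinal.add_one_eq_succ]
    exact omega1_isLimit.succ_lt (eps_lt (bsel_spec f h).1)

end Stmt4Aux

open Stmt4Aux

/-- Above any countable `β₀` there are countable limit ordinals `α < α'` such that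
the limsup configuration at stage `ω_α` recurs at stage `ω_{α'}`, with no cell
bounded below `ω_α` showing `1` in between. -/
theorem stmt_4 (f : ℕ → Ordinal → Bool) :
    ∀ β₀ < (Cardinal.aleph 1).ord,
      ∃ α α', Order.IsSuccLimit α ∧ Order.IsSuccLimit α' ∧ β₀ < α ∧ α < α' ∧
        α' < (Cardinal.aleph 1).ord ∧ ∀ n,
        (UnboundedIn {γ | f n γ = true} (Cardinal.aleph α).ord ↔
          UnboundedIn {γ | f n γ = true} (Cardinal.aleph α').ord) ∧
        (¬ UnboundedIn {γ | f n γ = true} (Cardinal.aleph α).ord →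
          ∀ γ, (Cardinal.aleph α).ord ≤ γ → γ < (Cardinal.aleph α').ord → f n γ = false) := by
  intro β₀ hβ₀
  rw [ord_aleph] at hβ₀
  have hsucc : β₀ + 1 < ω₁ := by
    rw [Ordinal.add_one_eq_succ]; exact omega1_isLimit.succ_lt hβ₀
  set base : Ordinal := (β₀ + 1) ⊔ ⨆ n, abnd f n with hbase_def
  have hbase_lt : base < ω₁ :=
    max_lt hsucc (iSup_lt_ord_lift nat_lt_cof (abnd_lt f))
  set α : Ordinal := ⨆ k, seq f base k with hα_def
  have hα_lt : α < ω₁ := sup_seq_lt f hbase_lt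
  have hα1 : α + 1 < ω₁ := by
    rw [Ordinal.add_one_eq_succ]; exact omega1_isLimit.succ_lt hα_lt
  set α' : Ordinal := ⨆ k, seq f (α + 1) k with hα'_def
  have hα'_lt : α' < ω₁ := sup_seq_lt f hα1
  have hbase_le_α : base ≤ α := (lt_sup_seq f base).le
  have hα_lt_α' : α < α' := lt_of_lt_of_le (lt_add_one α) (lt_sup_seq f (α + 1)).le
  refine ⟨α, α', sup_seq_isLimit f base, sup_seq_isLimit f (α + 1), ?_, hα_lt_α', ?_, ?_⟩
  · calc β₀ < β₀ + 1 := lt_add_one β₀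
    _ ≤ base := le_max_left _ _
    _ ≤ α := hbase_le_α
  · rw [ord_aleph]; exact hα'_lt
  · intro n
    simp only [ord_aleph]
    by_cases hU : UnboundedIn {γ | f n γ = true} (ω_ ω₁)
    · have h1 := sup_seq_unbounded f hU hbase_lt
      have h2 := sup_seq_unbounded f hU hα1
      exact ⟨iff_of_true h1 h2, fun hc => absurd h1 hc⟩
    · obtain ⟨hbΛ, hbprop⟩ := bsel_spec f hU
      have heps_lt_base : eps (bsel f n) < base := by
        have h1 : eps (bsel f n) + 1 ≤ base := by
          calc eps (bsel f n) + 1 = abnd f n := by rw [abnd, if_neg hU]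
          _ ≤ ⨆ m, abnd f m := le_ciSup (Ordinal.bddAbove_range _) n
          _ ≤ base := le_max_right _ _
        exact lt_of_lt_of_le (lt_add_one _) h1
      have hb_lt_α : bsel f n < ω_ α := by
        calc bsel f n < ω_ (eps (bsel f n)) := lt_omega_eps hbΛ
        _ ≤ ω_ α := omega_le_omega.2 (le_trans heps_lt_base.le hbase_le_α)
      have hnot : ∀ δ, δ ≤ α' → bsel f n < ω_ δ →
          ¬ UnboundedIn {γ | f n γ = true} (ω_ δ) := by
        intro δ hδ hbδ h
        obtain ⟨γ, hγT, hγ1, hγ2⟩ := h (bsel f n) hbδ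
        have hγΛ : γ < ω_ ω₁ :=
          lt_of_lt_of_le hγ2 (omega_le_omega.2 (le_of_lt (lt_of_le_of_lt hδ hα'_lt)))
        have := hbprop γ hγ1 hγΛ
        simp only [Set.mem_setOf_eq] at hγT
        rw [hγT] at this
        exact Bool.true_eq_false.mp this |>.elim
      have hnotα := hnot α hα_lt_α'.le hb_lt_α
      have hnotα' := hnot α' le_rfl
        (lt_of_lt_of_le hb_lt_α (omega_le_omega.2 hα_lt_α'.le))
      refine ⟨iff_of_false hnotα hnotα', fun _ γ h1 h2 => ?_⟩
      exact hbprop γ (le_trans hb_lt_α.le h1)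
        (lt_of_lt_of_le h2 (omega_le_omega.2 hα'_lt.le))
end

section
/- For every f : ℕ → Ordinal → Bool there exist limit ordinals δ and δ' with δ < δ' < ω₁ such that for every n: the set {γ : γ < δ ∧ f n γ = true} is unbounded in δ if and only if the set {γ : γ < δ' ∧ f n γ = true} is unbounded in δ'; and moreover, if {γ : γ < δ ∧ f n γ = true} is bounded in δ, then f n γ = false for every γ with δ ≤ γ < δ'. -/
open Cardinal Ordinal

/-- There are countable limit ordinals `δ < δ'` such that the limsup configuration
at stage `δ` recurs at stage `δ'`, with no cell bounded below `δ` showing `1`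
in between. -/
theorem stmt_5 (f : ℕ → Ordinal → Bool) :
    ∃ δ δ', Order.IsSuccLimit δ ∧ Order.IsSuccLimit δ' ∧ δ < δ' ∧
      δ' < (Cardinal.aleph 1).ord ∧ ∀ n,
      (UnboundedIn {γ | f n γ = true} δ ↔ UnboundedIn {γ | f n γ = true} δ') ∧
      (¬ UnboundedIn {γ | f n γ = true} δ →
        ∀ γ, δ ≤ γ → γ < δ' → f n γ = false) := by
  classical
  set Ω := (Cardinal.aleph 1).ord with hΩdef
  have hΩlim : Order.IsSuccLimit Ω := isSuccLimit_ord (aleph0_le_aleph 1)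
  have hnat : Cardinal.lift.{_, 0} (#ℕ) < aleph 1 := by
    simpa using aleph0_lt_aleph_one
  have hsup : ∀ h : ℕ → Ordinal, (∀ k, h k < Ω) → (⨆ k, h k) < Ω := by
    intro h hh
    rw [hΩdef]
    exact iSup_lt_ord_lift_of_isRegular (f := h) isRegular_aleph_one hnat
      fun k => by rw [← hΩdef]; exact hh k
  set P : ℕ → Prop := fun n => UnboundedIn {γ | f n γ = true} Ω with hPdef
  -- a bound below which all "bounded" cells have stabilized to false
  have hbn : ∀ n, ∃ b, b < Ω ∧ (¬ P n → ∀ γ, b ≤ γ → γ < Ω → f n γ = false) := by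
    intro n
    by_cases h : P n
    · exact ⟨0, hΩlim.pos, fun hn => absurd h hn⟩
    · rw [hPdef] at h
      replace h : ¬ ∀ β < Ω, ∃ γ ∈ {γ | f n γ = true}, β ≤ γ ∧ γ < Ω := h
      push_neg at h
      obtain ⟨b, hb, hb2⟩ := h
      refine ⟨b, hb, fun _ γ h1 h2 => ?_⟩
      by_contra hg
      exact absurd (hb2 γ (by simpa using hg) h1) (not_le.mpr h2)
  choose bn hbnΩ hbn2 using hbn
  set B : Ordinal := ⨆ n, bn n with hBdef
  have hBΩ : B < Ω := hsup _ hbnΩ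
  have hBstab : ∀ n, ¬ P n → ∀ γ, B ≤ γ → γ < Ω → f n γ = false := fun n hn γ h1 h2 =>
    hbn2 n hn γ (le_trans (Ordinal.le_iSup bn n) h1) h2
  -- the "next" function g
  have hgex : ∀ β, ∃ g, β < g ∧ (β < Ω → g < Ω) ∧
      (β < Ω → ∀ n, P n → ∃ γ, f n γ = true ∧ β ≤ γ ∧ γ < g) := by
    intro β
    by_cases hβ : β < Ω
    · have : ∀ n, ∃ γ, (P n → f n γ = true ∧ β ≤ γ) ∧ γ < Ω := by
        intro n
        by_cases h : P n
        · obtain ⟨γ, hγ1, hγ2, hγ3⟩ := h β hβ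
          exact ⟨γ, fun _ => ⟨hγ1, hγ2⟩, hγ3⟩
        · exact ⟨0, fun h' => absurd h' h, hΩlim.pos⟩
      choose w hw hwΩ using this
      refine ⟨max (β + 1) (⨆ n, w n + 1), ?_, ?_, ?_⟩
      · exact lt_of_lt_of_le (Order.lt_succ β) (le_max_left _ _)
      · intro _
        exact max_lt (hΩlim.succ_lt hβ) (hsup _ fun n => hΩlim.succ_lt (hwΩ n))
      · intro _ n hn
        refine ⟨w n, (hw n hn).1, (hw n hn).2, ?_⟩
        exact lt_of_lt_of_le (Order.lt_succ (w n))
          (le_trans (Ordinal.le_iSup (fun n => w n + 1) n) (le_max_right _ _))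
    · exact ⟨β + 1, Order.lt_succ β, fun h => absurd h hβ, fun h => absurd h hβ⟩
  choose g hg1 hg2 hg3 using hgex
  -- iterate g ω-many times starting from s
  have key : ∀ s, s < Ω → ∃ d, s < d ∧ d < Ω ∧ Order.IsSuccLimit d ∧
      ∀ n, P n → UnboundedIn {γ | f n γ = true} d := by
    intro s hs
    set q : ℕ → Ordinal := fun k => g^[k] s with hq
    have hqsucc : ∀ k, q (k + 1) = g (q k) := by
      intro k; rw [hq]; simp [Function.iterate_succ_apply']
    have hqΩ : ∀ k, q k < Ω := by
      intro k
      induction k with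
      | zero => exact hs
      | succ k ih => rw [hqsucc k]; exact hg2 _ ih
    have hqlt : ∀ k, q k < q (k + 1) := fun k => (hqsucc k) ▸ hg1 (q k)
    set d : Ordinal := ⨆ k, q k with hd
    have hqd : ∀ k, q k < d := fun k =>
      lt_of_lt_of_le (hqlt k) (Ordinal.le_iSup q (k + 1))
    have hdΩ : d < Ω := hsup _ hqΩ
    refine ⟨d, hqd 0, hdΩ, Ordinal.isSuccLimit_iff.mpr ⟨?_, Order.isSuccPrelimit_of_succ_lt ?_⟩, ?_⟩
    · exact fun h => (not_lt_of_ge (zero_le (a := q 0))) (h ▸ hqd 0)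
    · intro a ha
      rw [hd, Ordinal.lt_iSup_iff] at ha
      obtain ⟨k, hk⟩ := ha
      exact lt_of_le_of_lt (Order.succ_le_of_lt (lt_of_lt_of_le hk (le_of_lt (hqlt k))))
        (hqd (k + 1))
    · intro n hn β hβ
      rw [hd, Ordinal.lt_iSup_iff] at hβ
      obtain ⟨k, hk⟩ := hβ
      obtain ⟨γ, hγ1, hγ2, hγ3⟩ := hg3 (q k) (hqΩ k) n hn
      exact ⟨γ, hγ1, le_of_lt (lt_of_lt_of_le hk hγ2), lt_of_lt_of_le ((hqsucc k) ▸ hγ3)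
        (le_of_lt (hqd (k + 1)))⟩
  obtain ⟨δ, hδ1, hδΩ, hδlim, hδunb⟩ := key (B + 1) (hΩlim.succ_lt hBΩ)
  obtain ⟨δ', hδ'1, hδ'Ω, hδ'lim, hδ'unb⟩ := key (δ + 1) (hΩlim.succ_lt hδΩ)
  have hδδ' : δ < δ' := lt_trans (Order.lt_succ δ) hδ'1
  have hBδ : B < δ := lt_trans (Order.lt_succ B) hδ1
  -- if ¬ P n then the cell is bounded in any d with B < d ≤ Ω
  have hbdd : ∀ n, ¬ P n → ∀ d, B < d → d < Ω → ¬ UnboundedIn {γ | f n γ = true} d := by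
    intro n hn d hBd hdΩ hu
    obtain ⟨γ, hγ1, hγ2, hγ3⟩ := hu B hBd
    have := hBstab n hn γ hγ2 (lt_trans hγ3 hdΩ)
    simp [this] at hγ1
  refine ⟨δ, δ', hδlim, hδ'lim, hδδ', hδ'Ω, fun n => ?_⟩
  by_cases hn : P n
  · refine ⟨iff_of_true (hδunb n hn) (hδ'unb n hn), fun h => absurd (hδunb n hn) h⟩
  · refine ⟨iff_of_false (hbdd n hn δ hBδ hδΩ) (hbdd n hn δ' (lt_trans hBδ hδδ') hδ'Ω), ?_⟩
    intro _ γ h1 h2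
    exact hBstab n hn γ (le_trans (le_of_lt hBδ) h1) (lt_trans h2 hδ'Ω)
end

section
/- Let e : Ordinal → Ordinal be strictly increasing and continuous (i.e. e(λ) = sup_{ξ<λ} e(ξ) for every limit ordinal λ). For every f : ℕ → Ordinal → Bool there exist limit ordinals α and α' with α < α' < ω₁ such that for every n: the set {γ : γ < e(α) ∧ f n γ = true} is unbounded in e(α) if and only if the set {γ : γ < e(α') ∧ f n γ = true} is unbounded in e(α'); and moreover, if {γ : γ < e(α) ∧ f n γ = true} is bounded in e(α), then f n γ = false for every γ with e(α) ≤ γ < e(α'). -/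
open Cardinal Ordinal

section Aux

variable {e : Ordinal → Ordinal}

private lemma aux_lt_e_of_lt_iSup {l : Ordinal} {β : Ordinal} (hl : Order.IsSuccLimit l)
    (hcont : e l = ⨆ ξ : Set.Iio l, e ξ.1) (hβ : β < e l) :
    ∃ ξ < l, β < e ξ := by
  by_contra h
  push_neg at h
  rw [hcont] at hβ
  have : Nonempty (Set.Iio l) := ⟨⟨0, hl.pos⟩⟩
  exact absurd (ciSup_le fun ξ : Set.Iio l => h ξ.1 ξ.2) (not_le.2 hβ)

/-- Chain construction: above any countable `b` there is a countable limit `α`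
such that every cell unbounded in `e Ω` is unbounded in `e α`. -/
private lemma aux_chain (hmono : StrictMono e)
    (hcont : ∀ l, Order.IsSuccLimit l → e l = ⨆ ξ : Set.Iio l, e ξ.1)
    (f : ℕ → Ordinal → Bool) (b : Ordinal) (hb : b < (Cardinal.aleph 1).ord) :
    ∃ α, Order.IsSuccLimit α ∧ b < α ∧ α < (Cardinal.aleph 1).ord ∧
      ∀ n, UnboundedIn {γ | f n γ = true} (e (Cardinal.aleph 1).ord) →
        UnboundedIn {γ | f n γ = true} (e α) := by
  set Ω := (Cardinal.aleph 1).ord with hΩdef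
  have hΩlim : Order.IsSuccLimit Ω := Cardinal.isSuccLimit_ord (Cardinal.aleph0_le_aleph 1)
  have hδ : e Ω = ⨆ ξ : Set.Iio Ω, e ξ.1 := hcont Ω hΩlim
  -- the step function
  have step : ∀ (n : ℕ) (x : Ordinal), x < Ω → ∃ y, x < y ∧ y < Ω ∧
      (UnboundedIn {γ | f n γ = true} (e Ω) → ∃ γ, f n γ = true ∧ e x ≤ γ ∧ γ < e y) := by
    intro n x hx
    by_cases h : UnboundedIn {γ | f n γ = true} (e Ω)
    · obtain ⟨γ, hγS, hγ1, hγ2⟩ := h (e x) (hmono hx)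
      obtain ⟨ξ, hξΩ, hγξ⟩ := aux_lt_e_of_lt_iSup hΩlim hδ hγ2
      refine ⟨max ξ (x + 1), lt_max_iff.2 (Or.inr (lt_add_one x)),
        max_lt hξΩ (hΩlim.succ_lt hx), fun _ => ⟨γ, hγS, hγ1, ?_⟩⟩
      exact hγξ.trans_le (hmono.monotone (le_max_left _ _))
    · exact ⟨x + 1, lt_add_one x, hΩlim.succ_lt hx, fun h' => absurd h' h⟩
  choose next hlt hnextΩ hnextγ using step
  -- the chain
  let g : ℕ → Set.Iio Ω := fun k =>
    Nat.rec (⟨b, hb⟩ : Set.Iio Ω)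
      (fun k p => ⟨next (Nat.unpair k).1 p.1 p.2, hnextΩ _ _ _⟩) k
  have hg0 : (g 0).1 = b := rfl
  have hgsucc : ∀ k, (g (k + 1)).1 = next (Nat.unpair k).1 (g k).1 (g k).2 := fun _ => rfl
  have hgmono : StrictMono fun k => (g k).1 := by
    apply strictMono_nat_of_lt_succ
    intro k
    rw [hgsucc]
    exact hlt _ _ _
  set α := ⨆ k, (g k).1 with hαdef
  have hgle : ∀ k, (g k).1 ≤ α := fun k => Ordinal.le_iSup (fun k => (g k).1) k
  have hglt : ∀ k, (g k).1 < α := fun k => (hgmono (Nat.lt_succ_self k)).trans_le (hgle (k + 1))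
  have hαΩ : α < Ω := by
    apply Ordinal.iSup_lt_ord_lift
    · rw [Cardinal.mk_nat, Cardinal.lift_aleph0, hΩdef, Cardinal.isRegular_aleph_one.cof_eq]
      exact Cardinal.aleph0_lt_aleph_one
    · exact fun k => (g k).2
  have hbα : b < α := hg0 ▸ hglt 0
  have hαlim : Order.IsSuccLimit α := by
    refine Ordinal.isSuccLimit_iff.2 ⟨((zero_le (a := b)).trans_lt hbα).ne', Order.isSuccPrelimit_of_succ_lt fun a ha => ?_⟩
    rw [hαdef, Ordinal.lt_iSup_iff] at ha
    obtain ⟨k, hk⟩ := ha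
    exact (Order.succ_le_of_lt hk).trans_lt (hglt k)
  refine ⟨α, hαlim, hbα, hαΩ, fun n hUnb β hβ => ?_⟩
  -- unboundedness in e α
  obtain ⟨ξ, hξα, hβξ⟩ := aux_lt_e_of_lt_iSup hαlim (hcont α hαlim) hβ
  have : ξ < ⨆ k, (g k).1 := hξα
  rw [Ordinal.lt_iSup_iff] at this
  obtain ⟨k, hξk⟩ := this
  set k' := Nat.pair n k with hk'def
  have hkk' : k ≤ k' := Nat.right_le_pair n k
  obtain ⟨γ, hγS, hγ1, hγ2⟩ := hnextγ (Nat.unpair k').1 (g k').1 (g k').2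
    (by rw [hk'def, Nat.unpair_pair]; exact hUnb)
  rw [← hgsucc] at hγ2
  refine ⟨γ, by rw [hk'def, Nat.unpair_pair] at hγS; exact hγS, ?_, ?_⟩
  · have : e ξ ≤ e (g k').1 := hmono.monotone (hξk.le.trans (hgmono.monotone hkk'))
    exact (hβξ.trans_le this).le.trans hγ1
  · exact hγ2.trans (hmono (hglt (k' + 1)))

end Aux

/-- For a strictly increasing continuous `e` (enumerating a club class) there are
countable limit ordinals `α < α'` such that the limsup configuration at stage `e α`
recurs at stage `e α'`, with no cell bounded below `e α` showing `1` in between. -/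
theorem stmt_6 (e : Ordinal → Ordinal) (hmono : StrictMono e)
    (hcont : ∀ l, Order.IsSuccLimit l → e l = ⨆ ξ : Set.Iio l, e ξ.1)
    (f : ℕ → Ordinal → Bool) :
    ∃ α α', Order.IsSuccLimit α ∧ Order.IsSuccLimit α' ∧ α < α' ∧
      α' < (Cardinal.aleph 1).ord ∧ ∀ n,
      (UnboundedIn {γ | f n γ = true} (e α) ↔ UnboundedIn {γ | f n γ = true} (e α')) ∧
      (¬ UnboundedIn {γ | f n γ = true} (e α) →
        ∀ γ, e α ≤ γ → γ < e α' → f n γ = false) := by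
  set Ω := (Cardinal.aleph 1).ord with hΩdef
  have hΩlim : Order.IsSuccLimit Ω := Cardinal.isSuccLimit_ord (Cardinal.aleph0_le_aleph 1)
  have hδ : e Ω = ⨆ ξ : Set.Iio Ω, e ξ.1 := hcont Ω hΩlim
  -- a bound below which all eventually-false cells have all their true stages
  have hB : ∀ n, ∃ x, x < Ω ∧ (¬ UnboundedIn {γ | f n γ = true} (e Ω) →
      ∀ γ, e x ≤ γ → γ < e Ω → f n γ = false) := by
    intro n
    by_cases h : UnboundedIn {γ | f n γ = true} (e Ω)
    · exact ⟨0, hΩlim.pos, fun h' => absurd h h'⟩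
    · unfold UnboundedIn at h
      push_neg at h
      obtain ⟨β, hβδ, hβ⟩ := h
      obtain ⟨ξ, hξΩ, hβξ⟩ := aux_lt_e_of_lt_iSup hΩlim hδ hβδ
      refine ⟨ξ, hξΩ, fun _ γ h1 h2 => ?_⟩
      by_contra hne
      have hγS : f n γ = true := by
        cases hf : f n γ
        · exact absurd hf hne
        · rfl
      exact absurd h2 (not_lt.2 (hβ γ hγS (hβξ.le.trans h1)))
  choose B hBΩ hBprop using hB
  have hα₀Ω : (⨆ n, B n) < Ω := by
    apply Ordinal.iSup_lt_ord_lift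
    · rw [Cardinal.mk_nat, Cardinal.lift_aleph0, hΩdef, Cardinal.isRegular_aleph_one.cof_eq]
      exact Cardinal.aleph0_lt_aleph_one
    · exact hBΩ
  set α₀ := ⨆ n, B n with hα₀def
  have hα₀prop : ∀ n, ¬ UnboundedIn {γ | f n γ = true} (e Ω) →
      ∀ γ, e α₀ ≤ γ → γ < e Ω → f n γ = false := by
    intro n hn γ h1 h2
    exact hBprop n hn γ ((hmono.monotone (Ordinal.le_iSup B n)).trans h1) h2
  obtain ⟨α, hαlim, hα₀α, hαΩ, hαunb⟩ := aux_chain hmono hcont f α₀ hα₀Ω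
  obtain ⟨α', hα'lim, hαα', hα'Ω, hα'unb⟩ := aux_chain hmono hcont f α hαΩ
  refine ⟨α, α', hαlim, hα'lim, hαα', hα'Ω, fun n => ?_⟩
  by_cases h : UnboundedIn {γ | f n γ = true} (e Ω)
  · exact ⟨iff_of_true (hαunb n h) (hα'unb n h), fun hc => absurd (hαunb n h) hc⟩
  · have hbα : ¬ UnboundedIn {γ | f n γ = true} (e α) := by
      intro hu
      obtain ⟨γ, hγS, h1, h2⟩ := hu (e α₀) (hmono hα₀α)
      have := hα₀prop n h γ h1 (h2.trans (hmono hαΩ))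
      simp only [Set.mem_setOf_eq] at hγS
      rw [hγS] at this
      exact absurd this (by simp)
    have hbα' : ¬ UnboundedIn {γ | f n γ = true} (e α') := by
      intro hu
      obtain ⟨γ, hγS, h1, h2⟩ := hu (e α₀) (hmono (hα₀α.trans hαα'))
      have := hα₀prop n h γ h1 (h2.trans (hmono hα'Ω))
      simp only [Set.mem_setOf_eq] at hγS
      rw [hγS] at this
      exact absurd this (by simp)
    refine ⟨iff_of_false hbα hbα', fun _ γ h1 h2 => ?_⟩
    exact hα₀prop n h γ ((hmono hα₀α).le.trans h1) (h2.trans (hmono hα'Ω))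
end
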